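/- arXiv:1704.06552 — 3 statements merged into one kernel-verified Lean document; each statement's English description precedes it below -/
import Mathlib

section
/- Let H be a Hopf algebra with invertible antipode and M an anti-Yetter-Drinfeld module. Then σ_M: M → M, m ↦ m₁m₀, is an H-module and H-comodule automorphism of M with inverse m ↦ S⁻¹(m₁)m₀, and for any morphism θ: M → M' of anti-Yetter-Drinfeld modules, θ ∘ σ_M = σ_{M'} ∘ θ. -/
/-!
Write `act : M ⊗ H → M`, `m ⊗ h ↦ h • m`, so that `σ = act ∘ ρ` and `σ⁻¹ = act ∘ (id ⊗ S⁻¹) ∘ ρ`.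
The anti-Yetter–Drinfeld condition says that `ρ(h • m) = h ▷ ρ(m)` for the twisted action
`h ▷ (m ⊗ u) = h²m ⊗ h³uS(h¹)` of `H` on `M ⊗ H`. Two Hopf-algebra identities about the twist do
all the work: `h³uS(h¹)h² = hu` says that `act` turns `▷` into the action on `M`, so `σ` is
`H`-linear; and `h₍₂₎² ⊗ h₍₂₎³h₍₁₎S(h₍₂₎¹) = Δh` combines with coassociativity of `ρ` to make `σ`
colinear. By linearity (for `σ ∘ σ⁻¹`) and colinearity (for `σ⁻¹ ∘ σ`) both composites become
`m ↦ S⁻¹(m₁)σ(m₀) = S⁻¹(m₁₍₂₎)m₁₍₁₎m₀ = ε(m₁)m₀ = m`. Naturality only uses that `θ` commutes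
with `act` and `ρ`.
-/

open TensorProduct LinearMap

noncomputable section

universe u

/-- A right `H`-comodule structure on `V`. -/
structure RComod (k : Type u) (H V : Type u) [CommRing k] [AddCommGroup H] [Module k H]
    [Coalgebra k H] [AddCommGroup V] [Module k V] where
  ρ : V →ₗ[k] V ⊗[k] H
  coassoc : (TensorProduct.assoc k V H H).toLinearMap ∘ₗ (ρ.rTensor H) ∘ₗ ρ
      = (LinearMap.lTensor V (Coalgebra.comul (R := k) (A := H))) ∘ₗ ρ
  counit_id : (TensorProduct.rid k V).toLinearMap ∘ₗ
      (LinearMap.lTensor V (Coalgebra.counit (R := k) (A := H))) ∘ₗ ρ = LinearMap.id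

/-- A right `H`-contramodule structure on `N`. -/
structure RContramod (k : Type u) (H N : Type u) [CommRing k] [AddCommGroup H] [Module k H]
    [Coalgebra k H] [AddCommGroup N] [Module k N] where
  α : (H →ₗ[k] N) →ₗ[k] N
  contraassoc : ∀ f : H ⊗[k] H →ₗ[k] N,
      α (α ∘ₗ (TensorProduct.curry f)) = α (f ∘ₗ Coalgebra.comul (R := k) (A := H))
  counit_id : ∀ n : N, α ((Coalgebra.counit (R := k) (A := H)).smulRight n) = n

/-- The action of `h : H` on `N` as a `k`-linear map. -/
def hSmulMap (k : Type u) {H N : Type u} [CommRing k] [Ring H] [AddCommGroup N] [Module k N]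
    [Module H N] [SMulCommClass k H N] (h : H) : N →ₗ[k] N where
  toFun n := h • n
  map_add' a b := smul_add h a b
  map_smul' c n := (smul_comm c h n).symm

section Hopf
variable (k H : Type u) [CommRing k] [Ring H] [HopfAlgebra k H]

/-- `(Δ ⊗ id) ∘ Δ`, the triple comultiplication. -/
def comul₂ : H →ₗ[k] (H ⊗[k] H) ⊗[k] H :=
  (LinearMap.rTensor H (Coalgebra.comul (R := k) (A := H))) ∘ₗ Coalgebra.comul (R := k)

variable {k H}

/-- The anti-Yetter-Drinfeld (more generally `YD_i`) compatibility, stated via Sweedler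
representations: whenever `(Δ ⊗ id)(Δ h) = ∑ h¹ ⊗ h² ⊗ h³` and `ρ m = ∑ m₀ ⊗ m₁`, we have
`ρ(h • m) = ∑ h² m₀ ⊗ h³ m₁ T(h¹)` where `T` is a given twist (e.g. the antipode). -/
def IsYDtw {M : Type u} [AddCommGroup M] [Module k M] [Module H M] [SMulCommClass k H M]
    (T : H →ₗ[k] H) (c : RComod k H M) : Prop :=
  ∀ (h : H) (m : M) (n p : ℕ) (h1 h2 h3 : Fin n → H) (m0 : Fin p → M) (m1 : Fin p → H),
    comul₂ k H h = ∑ i, (h1 i ⊗ₜ[k] h2 i) ⊗ₜ[k] h3 i →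
    c.ρ m = ∑ j, m0 j ⊗ₜ[k] m1 j →
    c.ρ (h • m) = ∑ i, ∑ j, (h2 i • m0 j) ⊗ₜ[k] (h3 i * m1 j * T (h1 i))

/-- The anti-Yetter-Drinfeld compatibility `(hm)₀ ⊗ (hm)₁ = h²m₀ ⊗ h³m₁S(h¹)`. -/
def IsAYD {M : Type u} [AddCommGroup M] [Module k M] [Module H M] [SMulCommClass k H M]
    (c : RComod k H M) : Prop :=
  IsYDtw (HopfAlgebra.antipode (R := k) (A := H)) c

/-- The anti-Yetter-Drinfeld contramodule compatibility (for a general twist `T` in place of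
`S²` in `S^{2-2i}`): `h • α(f) = α(x ↦ h² f(S(h³) x T(h¹)))`, via Sweedler representations. -/
def IsYDContratw {N : Type u} [AddCommGroup N] [Module k N] [Module H N] [SMulCommClass k H N]
    (T : H →ₗ[k] H) (c : RContramod k H N) : Prop :=
  ∀ (h : H) (f : H →ₗ[k] N) (n : ℕ) (h1 h2 h3 : Fin n → H),
    comul₂ k H h = ∑ i, (h1 i ⊗ₜ[k] h2 i) ⊗ₜ[k] h3 i →
    h • c.α f = c.α (∑ i, hSmulMap k (h2 i) ∘ₗ f ∘ₗ
      (LinearMap.mulLeft k (HopfAlgebra.antipode (R := k) (A := H) (h3 i)) ∘ₗ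
        LinearMap.mulRight k (T (h1 i))))

/-- The anti-Yetter-Drinfeld contramodule compatibility
`h • α(f) = α(x ↦ h² f(S(h³) x h¹))`. -/
def IsAYDContra {N : Type u} [AddCommGroup N] [Module k N] [Module H N] [SMulCommClass k H N]
    (c : RContramod k H N) : Prop :=
  IsYDContratw LinearMap.id c

end Hopf

section ComodHom
variable {k H A B : Type u} [CommRing k] [AddCommGroup H] [Module k H] [Coalgebra k H]
  [AddCommGroup A] [Module k A] [AddCommGroup B] [Module k B]

/-- `f : A → B` is a map of right `H`-comodules. -/
def IsComodHom (ρA : A →ₗ[k] A ⊗[k] H) (ρB : B →ₗ[k] B ⊗[k] H) (f : A →ₗ[k] B) : Prop :=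
  ρB ∘ₗ f = (f.rTensor H) ∘ₗ ρA

end ComodHom

section TensorCoact
variable {k H A B : Type u} [CommRing k] [Ring H] [Bialgebra k H]
  [AddCommGroup A] [Module k A] [AddCommGroup B] [Module k B]

/-- The coaction on a tensor product of comodules: `a ⊗ b ↦ a₀ ⊗ b₀ ⊗ a₁b₁`. -/
def tensorCoaction (ρA : A →ₗ[k] A ⊗[k] H) (ρB : B →ₗ[k] B ⊗[k] H) :
    A ⊗[k] B →ₗ[k] (A ⊗[k] B) ⊗[k] H :=
  (LinearMap.lTensor (A ⊗[k] B) (LinearMap.mul' k H)) ∘ₗ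
    (TensorProduct.tensorTensorTensorComm k A H B H).toLinearMap ∘ₗ
      TensorProduct.map ρA ρB

/-- The trivial coaction on `k`. -/
def trivialCoaction (k H : Type u) [CommRing k] [Ring H] [Bialgebra k H] :
    k →ₗ[k] k ⊗[k] H :=
  (TensorProduct.mk k k H).flip 1

end TensorCoact

end

noncomputable section Prelude2

universe v

open TensorProduct LinearMap

section Act
variable (k H M : Type v) [CommRing k] [Ring H] [Algebra k H] [AddCommGroup M] [Module k M]
  [Module H M] [SMulCommClass k H M] [IsScalarTower k H M]

/-- The action of `H` on `M` as a `k`-bilinear map. -/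
def actBil : H →ₗ[k] M →ₗ[k] M where
  toFun h := hSmulMap k h
  map_add' h h' := by ext m; simp [hSmulMap, add_smul]
  map_smul' c h := by ext m; simp [hSmulMap, smul_assoc]

/-- The action of `H` on `M` as a `k`-linear map out of the tensor product. -/
def actMap : H ⊗[k] M →ₗ[k] M := TensorProduct.lift (actBil k H M)

end Act

section YDAct
variable {k H : Type v} [CommRing k] [Ring H] [HopfAlgebra k H]
variable {M : Type v} [AddCommGroup M] [Module k M]

/-- `act` is a unital, multiplicative action of `H`. -/
def IsActionMap (act : H →ₗ[k] M →ₗ[k] M) : Prop :=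
  act 1 = LinearMap.id ∧ ∀ g h : H, act (g * h) = (act g) ∘ₗ (act h)

/-- Generalized (anti-)Yetter-Drinfeld compatibility with twist `T` for an action given
by a bilinear map `act`: whenever `(Δ ⊗ id)(Δ h) = ∑ h¹ ⊗ h² ⊗ h³` and `ρ m = ∑ m₀ ⊗ m₁`,
we have `ρ(h · m) = ∑ (h² · m₀) ⊗ h³ m₁ T(h¹)`. -/
def IsYDAct (T : H →ₗ[k] H) (act : H →ₗ[k] M →ₗ[k] M) (c : RComod k H M) : Prop :=
  ∀ (h : H) (m : M) (n p : ℕ) (h1 h2 h3 : Fin n → H) (m0 : Fin p → M) (m1 : Fin p → H),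
    comul₂ k H h = ∑ i, (h1 i ⊗ₜ[k] h2 i) ⊗ₜ[k] h3 i →
    c.ρ m = ∑ j, m0 j ⊗ₜ[k] m1 j →
    c.ρ (act h m) = ∑ i, ∑ j, (act (h2 i) (m0 j)) ⊗ₜ[k] (h3 i * m1 j * T (h1 i))

/-- The antipode together with a two-sided inverse, as a unit of `Module.End k H`. -/
def antipodeUnit (Sinv : H →ₗ[k] H)
    (h1 : (HopfAlgebra.antipode (R := k) (A := H)) ∘ₗ Sinv = LinearMap.id)
    (h2 : Sinv ∘ₗ (HopfAlgebra.antipode (R := k) (A := H)) = LinearMap.id) :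
    (Module.End k H)ˣ where
  val := HopfAlgebra.antipode (R := k) (A := H)
  inv := Sinv
  val_inv := by rw [Module.End.mul_eq_comp, h1, Module.End.one_eq_id]
  inv_val := by rw [Module.End.mul_eq_comp, h2, Module.End.one_eq_id]

end YDAct
end Prelude2

noncomputable section Statement9
open TensorProduct LinearMap

universe w
variable {k H M M' : Type w} [Field k] [Ring H] [HopfAlgebra k H]
  [AddCommGroup M] [Module k M] [Module H M] [SMulCommClass k H M] [IsScalarTower k H M]
  [AddCommGroup M'] [Module k M'] [Module H M'] [SMulCommClass k H M'] [IsScalarTower k H M']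

/-- `σ : m ↦ m₁ • m₀`. -/
def sigmaMap (cM : RComod k H M) : M →ₗ[k] M :=
  actMap k H M ∘ₗ (TensorProduct.comm k M H).toLinearMap ∘ₗ cM.ρ

/-- `m ↦ S⁻¹(m₁) • m₀`. -/
def sigmaInvMap (Sinv : H →ₗ[k] H) (cM : RComod k H M) : M →ₗ[k] M :=
  actMap k H M ∘ₗ (TensorProduct.comm k M H).toLinearMap ∘ₗ
    (LinearMap.lTensor M Sinv) ∘ₗ cM.ρ

open Coalgebra HopfAlgebra

section TensorDecomposition

variable {R A B C : Type*} [CommSemiring R] [AddCommMonoid A] [Module R A]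
  [AddCommMonoid B] [Module R B] [AddCommMonoid C] [Module R C]

theorem TensorProduct.exists_sum_tmul_tmul_eq (x : (A ⊗[R] B) ⊗[R] C) :
    ∃ (n : ℕ) (a : Fin n → A) (b : Fin n → B) (c : Fin n → C),
      x = ∑ i, (a i ⊗ₜ b i) ⊗ₜ[R] c i := by
  induction x using TensorProduct.induction_on with
  | zero => exact ⟨0, Fin.elim0, Fin.elim0, Fin.elim0, by simp⟩
  | tmul ab c =>
    obtain ⟨n, a, b, rfl⟩ := TensorProduct.exists_sum_tmul_eq ab
    exact ⟨n, a, b, fun _ => c, by rw [TensorProduct.sum_tmul]⟩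
  | add x y hx hy =>
    obtain ⟨n, a, b, c, rfl⟩ := hx
    obtain ⟨n', a', b', c', rfl⟩ := hy
    exact ⟨n + n', Fin.append a a', Fin.append b b', Fin.append c c', by simp [Fin.sum_univ_add]⟩

end TensorDecomposition

lemma RComod.coassoc_apply {k H M : Type w} [CommRing k] [AddCommGroup H] [Module k H]
    [Coalgebra k H] [AddCommGroup M] [Module k M] (c : RComod k H M) (m : M) :
    TensorProduct.assoc k M H H (rTensor H c.ρ (c.ρ m)) = lTensor M comul (c.ρ m) :=
  LinearMap.congr_fun c.coassoc m

section HopfIdentities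

variable {k H : Type w} [CommRing k] [Ring H] [HopfAlgebra k H]

def adTwistTriple : H ⊗[k] ((H ⊗[k] H) ⊗[k] H) →ₗ[k] H ⊗[k] H :=
  lTensor H (mul' k H ∘ₗ (TensorProduct.comm k H H).toLinearMap) ∘ₗ
    (TensorProduct.leftComm k H H H).toLinearMap ∘ₗ
    rTensor (H ⊗[k] H) (mul' k H ∘ₗ lTensor H (antipode k)) ∘ₗ
    (TensorProduct.assoc k H H (H ⊗[k] H)).symm.toLinearMap ∘ₗ
    lTensor H (TensorProduct.assoc k H H H).toLinearMap

@[simp] lemma adTwistTriple_tmul (u a b c : H) :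
    adTwistTriple (u ⊗ₜ[k] ((a ⊗ₜ[k] b) ⊗ₜ[k] c)) = b ⊗ₜ (c * u * antipode k a) := by
  simp [adTwistTriple, mul_assoc]

/-- `u ⊗ h ↦ ∑ h² ⊗ h³ u S(h¹)`. -/
def adTwist : H ⊗[k] H →ₗ[k] H ⊗[k] H :=
  adTwistTriple ∘ₗ lTensor H (comul₂ k H)

lemma adTwist_tmul {h : H} {n : ℕ} {h1 h2 h3 : Fin n → H}
    (hh : comul₂ k H h = ∑ i, (h1 i ⊗ₜ h2 i) ⊗ₜ[k] h3 i) (u : H) :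
    adTwist (u ⊗ₜ h) = ∑ i, h2 i ⊗ₜ[k] (h3 i * u * antipode k (h1 i)) := by
  simp [adTwist, hh, TensorProduct.tmul_sum]

lemma mul'_comm_adTwist (u h : H) :
    mul' k H (TensorProduct.comm k H H (adTwist (u ⊗ₜ h))) = h * u := by
  have triple (w : H ⊗[k] H) (c : H) :
      mul' k H (TensorProduct.comm k H H (adTwistTriple (u ⊗ₜ (w ⊗ₜ c)))) =
        c * u * mul' k H (rTensor H (antipode k) w) := by
    induction w using TensorProduct.induction_on with
    | zero => simp
    | tmul a b => simp [mul_assoc]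
    | add x y hx hy => simp_all [TensorProduct.add_tmul, TensorProduct.tmul_add, mul_add]
  let r := ℛ k h
  calc mul' k H (TensorProduct.comm k H H (adTwist (u ⊗ₜ h)))
      = ∑ i ∈ r.index, r.right i * u * algebraMap k H (counit (r.left i)) := by
        simp [adTwist, comul₂, ← r.eq, TensorProduct.tmul_sum, triple]
    _ = h * u := by
        simp_rw [← Algebra.commutes, ← Algebra.smul_def, ← smul_mul_assoc, ← Finset.sum_mul,
          sum_counit_smul]

lemma adTwist_comp_comul : adTwist ∘ₗ comul = comul (R := k) (A := H) := by
  have antipode_law : mul' k H ∘ₗ map id (antipode k) ∘ₗ comul =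
      Algebra.linearMap k H ∘ₗ counit :=
    mul_antipode_lTensor_comul
  have unit_law : map id (mul' k H ∘ₗ map id (Algebra.linearMap k H ∘ₗ counit)) ∘ₗ
      (TensorProduct.assoc k H H H).toLinearMap =
      (TensorProduct.rid k (H ⊗[k] H)).toLinearMap ∘ₗ map id (counit (R := k) (A := H)) := by
    ext a b c
    simp [← Algebra.commutes, ← Algebra.smul_def, TensorProduct.smul_tmul']
  -- `coassoc_simps` regroups `(id ⊗ Δ₂) Δ` as `(Δ ⊗ Δ) Δ`, which brings `h₍₁₎ S(h₍₂₎)` together.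
  simp only [adTwist, adTwistTriple, comul₂, coassoc_simps, antipode_law]
  rw [← LinearMap.comp_assoc, unit_law]
  simp only [coassoc_simps]
  ext h
  simp only [LinearMap.comp_apply]
  congr 1
  rw [← (ℛ k h).eq]
  simp [sum_counit_smul]

lemma mul'_comm_lTensor_comul_of_antipode_inverse (Sinv : H →ₗ[k] H)
    (hS1 : antipode k ∘ₗ Sinv = LinearMap.id) (hS2 : Sinv ∘ₗ antipode k = LinearMap.id) :
    mul' k H ∘ₗ (TensorProduct.comm k H H).toLinearMap ∘ₗ lTensor H Sinv ∘ₗ comul =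
      Algebra.linearMap k H ∘ₗ counit := by
  have antipode_injective : Function.Injective (antipode k (A := H)) :=
    Function.LeftInverse.injective (g := Sinv) (LinearMap.congr_fun hS2)
  ext h
  apply antipode_injective
  have hS1h (x : H) : antipode k (Sinv x) = x := LinearMap.congr_fun hS1 x
  simp only [LinearMap.comp_apply]
  rw [← (ℛ k h).eq]
  simp [map_sum, antipode_mul_antidistrib, hS1h, Algebra.algebraMap_eq_smul_one,
    sum_antipode_mul_eq_smul]

end HopfIdentities

section TwistedAction

variable {k H M N : Type w} [CommRing k] [Ring H] [HopfAlgebra k H]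
  [AddCommGroup M] [Module k M] [Module H M] [SMulCommClass k H M] [IsScalarTower k H M]
  [AddCommGroup N] [Module k N] [Module H N] [SMulCommClass k H N] [IsScalarTower k H N]

variable (k H M) in
def actComm : M ⊗[k] H →ₗ[k] M :=
  actMap k H M ∘ₗ (TensorProduct.comm k M H).toLinearMap

@[simp] lemma actComm_tmul (m : M) (h : H) : actComm k H M (m ⊗ₜ h) = h • m := by
  simp [actComm, actMap, actBil, hSmulMap]

lemma comp_actComm {f : M →ₗ[k] N} (hf : ∀ (h : H) (m : M), f (h • m) = h • f m) :
    f ∘ₗ actComm k H M = actComm k H N ∘ₗ rTensor H f := by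
  ext m h
  simp [hf]

lemma actComm_map_actComm (f : H →ₗ[k] H) (v : (M ⊗[k] H) ⊗[k] H) :
    actComm k H M (map (actComm k H M) f v) =
      actComm k H M (lTensor M (mul' k H ∘ₗ (TensorProduct.comm k H H).toLinearMap ∘ₗ
        lTensor H f) (TensorProduct.assoc k M H H v)) := by
  induction v using TensorProduct.induction_on with
  | zero => simp
  | tmul mu h =>
    induction mu using TensorProduct.induction_on with
    | zero => simp
    | tmul m u => simp [mul_smul]
    | add x y hx hy => simp_all [TensorProduct.add_tmul]
  | add x y hx hy => simp_all

lemma actComm_lTensor_algebraMap (v : M ⊗[k] k) :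
    actComm k H M (lTensor M (Algebra.linearMap k H) v) = TensorProduct.rid k M v := by
  induction v using TensorProduct.induction_on with
  | zero => simp
  | tmul m c => simp
  | add x y hx hy => simp_all

variable (M) in
/-- `(m ⊗ u) ⊗ h ↦ ∑ h² m ⊗ h³ u S(h¹)`. -/
def twistedAct : (M ⊗[k] H) ⊗[k] H →ₗ[k] M ⊗[k] H :=
  rTensor H (actComm k H M) ∘ₗ (TensorProduct.assoc k M H H).symm.toLinearMap ∘ₗ
    lTensor M adTwist ∘ₗ (TensorProduct.assoc k M H H).toLinearMap

lemma actComm_twistedAct (v : M ⊗[k] H) (h : H) :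
    actComm k H M (twistedAct M (v ⊗ₜ h)) = h • actComm k H M v := by
  induction v using TensorProduct.induction_on with
  | zero => simp
  | tmul m u =>
    have := actComm_map_actComm (M := M) LinearMap.id
      ((TensorProduct.assoc k M H H).symm (m ⊗ₜ adTwist (u ⊗ₜ h)))
    simp only [LinearEquiv.apply_symm_apply] at this
    simp [twistedAct, rTensor, this, mul'_comm_adTwist, mul_smul]
  | add x y hx hy => simp_all [TensorProduct.add_tmul]

lemma IsAYD.rho_comp_actComm {c : RComod k H M} (hM : IsAYD c) :
    c.ρ ∘ₗ actComm k H M = twistedAct M ∘ₗ rTensor H c.ρ := by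
  ext m h
  obtain ⟨p, m0, m1, hm⟩ := TensorProduct.exists_sum_tmul_eq (c.ρ m)
  obtain ⟨n, h1, h2, h3, hh⟩ := exists_sum_tmul_tmul_eq (comul₂ k H h)
  simp [hM h m n p h1 h2 h3 m0 m1 hh hm, hm, twistedAct, adTwist_tmul hh,
    TensorProduct.sum_tmul, TensorProduct.tmul_sum, Finset.sum_comm (γ := Fin n)]

end TwistedAction

section Sigma

variable {cM : RComod k H M}

lemma sigmaMap_smul (hM : IsAYD cM) (h : H) (m : M) :
    sigmaMap cM (h • m) = h • sigmaMap cM m := by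
  have hρ := LinearMap.congr_fun hM.rho_comp_actComm (m ⊗ₜ h)
  simp only [LinearMap.comp_apply, actComm_tmul, rTensor_tmul] at hρ
  calc sigmaMap cM (h • m) = actComm k H M (cM.ρ (h • m)) := rfl
    _ = actComm k H M (twistedAct M (cM.ρ m ⊗ₜ h)) := by rw [hρ]
    _ = h • sigmaMap cM m := actComm_twistedAct _ _

lemma isComodHom_sigmaMap (hM : IsAYD cM) : IsComodHom cM.ρ cM.ρ (sigmaMap cM) := by
  refine LinearMap.ext fun m => ?_
  calc cM.ρ (sigmaMap cM m) = twistedAct M (rTensor H cM.ρ (cM.ρ m)) :=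
        LinearMap.congr_fun hM.rho_comp_actComm (cM.ρ m)
    _ = rTensor H (actComm k H M) ((TensorProduct.assoc k M H H).symm
          (lTensor M adTwist (lTensor M comul (cM.ρ m)))) := by
        rw [← cM.coassoc_apply]; rfl
    _ = rTensor H (actComm k H M) ((TensorProduct.assoc k M H H).symm
          (lTensor M comul (cM.ρ m))) := by
        rw [← lTensor_comp_apply, adTwist_comp_comul]
    _ = rTensor H (sigmaMap cM) (cM.ρ m) := by
        rw [← cM.coassoc_apply, LinearEquiv.symm_apply_apply, ← rTensor_comp_apply]; rfl

lemma actComm_map_sigmaMap_rho (Sinv : H →ₗ[k] H)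
    (hS1 : antipode k ∘ₗ Sinv = LinearMap.id) (hS2 : Sinv ∘ₗ antipode k = LinearMap.id)
    (m : M) : actComm k H M (map (sigmaMap cM) Sinv (cM.ρ m)) = m := by
  calc actComm k H M (map (sigmaMap cM) Sinv (cM.ρ m))
      = actComm k H M (map (actComm k H M) Sinv (rTensor H cM.ρ (cM.ρ m))) := by
        rw [← LinearMap.comp_apply (map (actComm k H M) Sinv), map_comp_rTensor]; rfl
    _ = actComm k H M (lTensor M (mul' k H ∘ₗ (TensorProduct.comm k H H).toLinearMap ∘ₗ
          lTensor H Sinv) (lTensor M comul (cM.ρ m))) := by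
        rw [actComm_map_actComm, cM.coassoc_apply]
    _ = actComm k H M (lTensor M (Algebra.linearMap k H) (lTensor M counit (cM.ρ m))) := by
        rw [← lTensor_comp_apply, ← lTensor_comp_apply, LinearMap.comp_assoc,
          LinearMap.comp_assoc, mul'_comm_lTensor_comul_of_antipode_inverse Sinv hS1 hS2]
    _ = m := by
        rw [actComm_lTensor_algebraMap]
        exact LinearMap.congr_fun cM.counit_id m

lemma sigmaMap_comp_sigmaInvMap (Sinv : H →ₗ[k] H)
    (hS1 : antipode k ∘ₗ Sinv = LinearMap.id) (hS2 : Sinv ∘ₗ antipode k = LinearMap.id)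
    (hM : IsAYD cM) : sigmaMap cM ∘ₗ sigmaInvMap Sinv cM = LinearMap.id := by
  refine LinearMap.ext fun m => ?_
  calc sigmaMap cM (sigmaInvMap Sinv cM m)
      = sigmaMap cM (actComm k H M (lTensor M Sinv (cM.ρ m))) := rfl
    _ = actComm k H M (rTensor H (sigmaMap cM) (lTensor M Sinv (cM.ρ m))) :=
        LinearMap.congr_fun (comp_actComm (sigmaMap_smul hM)) _
    _ = m := by
        rw [← LinearMap.comp_apply (rTensor _ _), rTensor_comp_lTensor]
        exact actComm_map_sigmaMap_rho Sinv hS1 hS2 m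

lemma sigmaInvMap_comp_sigmaMap (Sinv : H →ₗ[k] H)
    (hS1 : antipode k ∘ₗ Sinv = LinearMap.id) (hS2 : Sinv ∘ₗ antipode k = LinearMap.id)
    (hM : IsAYD cM) : sigmaInvMap Sinv cM ∘ₗ sigmaMap cM = LinearMap.id := by
  refine LinearMap.ext fun m => ?_
  calc sigmaInvMap Sinv cM (sigmaMap cM m)
      = actComm k H M (lTensor M Sinv (cM.ρ (sigmaMap cM m))) := rfl
    _ = actComm k H M (lTensor M Sinv (rTensor H (sigmaMap cM) (cM.ρ m))) := by
        rw [← LinearMap.comp_apply cM.ρ, isComodHom_sigmaMap hM]; rfl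
    _ = m := by
        rw [← LinearMap.comp_apply (lTensor _ _), lTensor_comp_rTensor]
        exact actComm_map_sigmaMap_rho Sinv hS1 hS2 m

lemma sigmaMap_natural {cM' : RComod k H M'} (θ : M →ₗ[k] M')
    (hθ : ∀ (h : H) (m : M), θ (h • m) = h • θ m) (hθρ : IsComodHom cM.ρ cM'.ρ θ) :
    θ ∘ₗ sigmaMap cM = sigmaMap cM' ∘ₗ θ :=
  calc θ ∘ₗ sigmaMap cM = (θ ∘ₗ actComm k H M) ∘ₗ cM.ρ := rfl
    _ = actComm k H M' ∘ₗ rTensor H θ ∘ₗ cM.ρ := by rw [comp_actComm hθ]; rfl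
    _ = sigmaMap cM' ∘ₗ θ := by rw [← hθρ]; rfl

end Sigma

theorem stmt9_general (Sinv : H →ₗ[k] H)
    (hS1 : (HopfAlgebra.antipode (R := k) (A := H)) ∘ₗ Sinv = LinearMap.id)
    (hS2 : Sinv ∘ₗ (HopfAlgebra.antipode (R := k) (A := H)) = LinearMap.id)
    (cM : RComod k H M) (hM : IsAYD cM) (cM' : RComod k H M') :
    (sigmaMap cM ∘ₗ sigmaInvMap Sinv cM = LinearMap.id ∧
     sigmaInvMap Sinv cM ∘ₗ sigmaMap cM = LinearMap.id) ∧
    (∀ (h : H) (m : M), sigmaMap cM (h • m) = h • sigmaMap cM m) ∧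
    IsComodHom cM.ρ cM.ρ (sigmaMap cM) ∧
    (∀ θ : M →ₗ[k] M', (∀ (h : H) (m : M), θ (h • m) = h • θ m) →
      IsComodHom cM.ρ cM'.ρ θ → θ ∘ₗ sigmaMap cM = sigmaMap cM' ∘ₗ θ) :=
  ⟨⟨sigmaMap_comp_sigmaInvMap Sinv hS1 hS2 hM, sigmaInvMap_comp_sigmaMap Sinv hS1 hS2 hM⟩,
    sigmaMap_smul hM, isComodHom_sigmaMap hM, fun θ hθ hθρ => sigmaMap_natural θ hθ hθρ⟩

/-- for an anti-Yetter-Drinfeld module `M`, `σ_M : m ↦ m₁m₀` is an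
`H`-module and `H`-comodule automorphism of `M` with inverse `m ↦ S⁻¹(m₁)m₀`, and is
natural in `M` with respect to morphisms of anti-Yetter-Drinfeld modules. -/
theorem stmt9 (Sinv : H →ₗ[k] H)
    (hS1 : (HopfAlgebra.antipode (R := k) (A := H)) ∘ₗ Sinv = LinearMap.id)
    (hS2 : Sinv ∘ₗ (HopfAlgebra.antipode (R := k) (A := H)) = LinearMap.id)
    (cM : RComod k H M) (hM : IsAYD cM) (cM' : RComod k H M') (hM' : IsAYD cM') :
    (sigmaMap cM ∘ₗ sigmaInvMap Sinv cM = LinearMap.id ∧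
     sigmaInvMap Sinv cM ∘ₗ sigmaMap cM = LinearMap.id) ∧
    (∀ (h : H) (m : M), sigmaMap cM (h • m) = h • sigmaMap cM m) ∧
    IsComodHom cM.ρ cM.ρ (sigmaMap cM) ∧
    (∀ θ : M →ₗ[k] M', (∀ (h : H) (m : M), θ (h • m) = h • θ m) →
      IsComodHom cM.ρ cM'.ρ θ → θ ∘ₗ sigmaMap cM = sigmaMap cM' ∘ₗ θ) :=
  stmt9_general Sinv hS1 hS2 cM hM cM'

end Statement9
end

section
/- Let C = ⊕_{i∈I} C_i be a coalgebra over a field that is a direct sum of finite-dimensional subcoalgebras C_i with counits ε_i. For a right C-contramodule (M, α), set α_i(m) = α(ε_i(−)m) and M_i = α_i(M). Then α_i ∘ α_j = δ_{ij} α_i, and the map β: M → ∏_i M_i, m ↦ (α_i(m))_i, is a bijection. -/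
/-!
The key identity is `α(εᵢ(−) α(F)) = α(εᵢ(−) m₀)` whenever `F = ε(−) m₀` on `Cᵢ`: by
contraassociativity the left side is `α` applied to `x ↦ εᵢ(x¹) F(x²)`, and since `Δ Cᵢ ⊆ Cᵢ ⊗ Cᵢ`
while `εᵢ` kills the other summands, that map is `εᵢ(−) m₀`. With `F = εⱼ(−) m` this gives
`αᵢ ∘ αⱼ = δᵢⱼ αᵢ`. The inverse of `m ↦ (αᵢ m)ᵢ` sends `(mᵢ)ᵢ` to `α(F)`, where `F = εᵢ(−) mᵢ`
on `Cᵢ`: the key identity and idempotence make it a right inverse, and contraassociativity applied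
to the bilinear map `(x, y) ↦ εᵢ(x) εᵢ(y) m` on `Cᵢ × C`, which `Δ` turns back into `ε(−) m`,
makes it a left inverse.
-/

open TensorProduct LinearMap

theorem LinearMap.ext_of_iSup_eq_top {R M N ι : Type*} [Semiring R] [AddCommMonoid M]
    [Module R M] [AddCommMonoid N] [Module R N] {p : ι → Submodule R M} (hp : ⨆ i, p i = ⊤)
    {f g : M →ₗ[R] N} (h : ∀ i, ∀ x ∈ p i, f x = g x) : f = g := by
  have hle : ⨆ i, p i ≤ LinearMap.eqLocus f g := iSup_le fun i x hx => h i x hx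
  exact LinearMap.ext fun x => hle (hp ▸ Submodule.mem_top)

theorem DirectSum.IsInternal.exists_linearMap_restrict_eq {R M N ι : Type*} [Semiring R]
    [AddCommMonoid M] [Module R M] [AddCommMonoid N] [Module R N] [DecidableEq ι]
    {A : ι → Submodule R M} (h : DirectSum.IsInternal A) (f : ∀ i, A i →ₗ[R] N) :
    ∃ F : M →ₗ[R] N, ∀ i (x : A i), F x = f i x := by
  let e := LinearEquiv.ofBijective (DirectSum.coeLinearMap A) h
  refine ⟨DirectSum.toModule R ι N f ∘ₗ e.symm.toLinearMap, fun i x => ?_⟩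
  have he : e.symm x = DirectSum.lof R ι (fun i => A i) i x := by
    rw [LinearEquiv.symm_apply_eq]
    exact (DirectSum.coeLinearMap_of A i x).symm
  simp [he, DirectSum.toModule_lof]

section Coalgebra

variable {R C M : Type*} [CommSemiring R] [AddCommMonoid C] [Module R C] [Coalgebra R C]
  [AddCommMonoid M] [Module R M]

open Coalgebra

theorem Coalgebra.lift_comul_of_mem {D : Submodule R C}
    (hD : ∀ x ∈ D, comul (R := R) x ∈ range (map D.subtype D.subtype))
    (B : C →ₗ[R] C →ₗ[R] M) (m : M)
    (hB : ∀ a ∈ D, ∀ b ∈ D, B a b = (counit (R := R) a * counit (R := R) b) • m)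
    {x : C} (hx : x ∈ D) :
    lift B (comul (R := R) x) = counit (R := R) x • m := by
  obtain ⟨t, ht⟩ := hD x hx
  let K : C ⊗[R] C →ₗ[R] M :=
    (counit (R := R)).smulRight m ∘ₗ (TensorProduct.lid R C).toLinearMap ∘ₗ counit.rTensor C
  have hK : lift B ∘ₗ map D.subtype D.subtype = K ∘ₗ map D.subtype D.subtype :=
    TensorProduct.ext' fun a b => by simp [K, hB a a.2 b b.2, mul_smul]
  calc lift B (comul x) = K (comul x) := by rw [← ht]; exact LinearMap.congr_fun hK t
    _ = counit x • m := by simp [K, rTensor_counit_comul]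

structure IsSubcoalgebraDecomposition {ι : Type*} (Ci : ι → Submodule R C)
    (εi : ι → C →ₗ[R] R) : Prop where
  iSup_eq_top : ⨆ i, Ci i = ⊤
  comul_mem : ∀ i, ∀ x ∈ Ci i, comul (R := R) x ∈ range (map (Ci i).subtype (Ci i).subtype)
  apply_of_mem : ∀ i, ∀ x ∈ Ci i, εi i x = counit (R := R) x
  apply_of_mem_of_ne : ∀ i j, i ≠ j → ∀ x ∈ Ci j, εi i x = 0

namespace IsSubcoalgebraDecomposition

variable {ι : Type*} {Ci : ι → Submodule R C} {εi : ι → C →ₗ[R] R}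

theorem lift_smulRight_comp_comul (hC : IsSubcoalgebraDecomposition Ci εi) (i : ι)
    {F : C →ₗ[R] M} {m₀ : M} (hF : ∀ y ∈ Ci i, F y = counit (R := R) y • m₀) :
    lift ((εi i).smulRight F) ∘ₗ comul (R := R) = (εi i).smulRight m₀ := by
  refine LinearMap.ext_of_iSup_eq_top hC.iSup_eq_top fun j x hx => ?_
  rcases eq_or_ne i j with rfl | hij
  · have := Coalgebra.lift_comul_of_mem (hC.comul_mem i) ((εi i).smulRight F) m₀
      (fun a ha b hb => by simp [hC.apply_of_mem i a ha, hF b hb, mul_smul]) hx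
    simpa [hC.apply_of_mem i x hx] using this
  · have := Coalgebra.lift_comul_of_mem (hC.comul_mem j) ((εi i).smulRight F) 0
      (fun a ha b _ => by simp [hC.apply_of_mem_of_ne i j hij a ha]) hx
    simpa [hC.apply_of_mem_of_ne i j hij x hx] using this

theorem lift_comp_comul_eq_counit_smulRight (hC : IsSubcoalgebraDecomposition Ci εi)
    {W : C →ₗ[R] C →ₗ[R] M} {m : M} (hW : ∀ j, ∀ x ∈ Ci j, W x = εi j x • (εi j).smulRight m) :
    lift W ∘ₗ comul (R := R) = (counit (R := R)).smulRight m := by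
  refine LinearMap.ext_of_iSup_eq_top hC.iSup_eq_top fun j x hx => ?_
  simpa using Coalgebra.lift_comul_of_mem (hC.comul_mem j) W m (fun a ha b hb => by
    simp [hW j a ha, hC.apply_of_mem j a ha, hC.apply_of_mem j b hb, mul_smul]) hx

end IsSubcoalgebraDecomposition

end Coalgebra

namespace RContramod

universe u

variable {k C M : Type u} [CommRing k] [AddCommGroup C] [Module k C] [Coalgebra k C]
  [AddCommGroup M] [Module k M] (Cm : RContramod k C M)

open Coalgebra

theorem α_comp (B : C →ₗ[k] C →ₗ[k] M) : Cm.α (Cm.α ∘ₗ B) = Cm.α (lift B ∘ₗ comul (R := k)) := by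
  have hcurry : curry (lift B) = B := by ext; simp [curry_apply]
  simpa [hcurry] using Cm.contraassoc (lift B)

variable {ι : Type*} {Ci : ι → Submodule k C} {εi : ι → C →ₗ[k] k}

theorem α_smulRight_α (hC : IsSubcoalgebraDecomposition Ci εi) (i : ι) {F : C →ₗ[k] M}
    {m₀ : M} (hF : ∀ y ∈ Ci i, F y = counit (R := k) y • m₀) :
    Cm.α ((εi i).smulRight (Cm.α F)) = Cm.α ((εi i).smulRight m₀) := by
  rw [← hC.lift_smulRight_comp_comul i hF, ← Cm.α_comp]
  congr 1
  ext
  simp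

theorem α_smulRight_α_smulRight_self (hC : IsSubcoalgebraDecomposition Ci εi) (i : ι)
    (m : M) : Cm.α ((εi i).smulRight (Cm.α ((εi i).smulRight m))) = Cm.α ((εi i).smulRight m) :=
  Cm.α_smulRight_α hC i fun y hy => by simp [hC.apply_of_mem i y hy]

theorem α_smulRight_α_smulRight_of_ne (hC : IsSubcoalgebraDecomposition Ci εi) {i j : ι}
    (hij : i ≠ j) (m : M) : Cm.α ((εi i).smulRight (Cm.α ((εi j).smulRight m))) = 0 := by
  simpa using Cm.α_smulRight_α hC i (m₀ := 0) fun y hy => by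
    simp [hC.apply_of_mem_of_ne j i hij.symm y hy]

theorem α_eq_of_forall_mem_eq_smul [DecidableEq ι] (hC : IsSubcoalgebraDecomposition Ci εi)
    (hint : DirectSum.IsInternal Ci) {G : C →ₗ[k] M} {m : M}
    (hG : ∀ j, ∀ x ∈ Ci j, G x = εi j x • Cm.α ((εi j).smulRight m)) : Cm.α G = m := by
  obtain ⟨W, hW⟩ := hint.exists_linearMap_restrict_eq fun j =>
    ((εi j) ∘ₗ (Ci j).subtype).smulRight ((εi j).smulRight m)
  have hαW : Cm.α ∘ₗ W = G :=
    LinearMap.ext_of_iSup_eq_top hC.iSup_eq_top fun j x hx => by simp [hW j ⟨x, hx⟩, hG j x hx]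
  have hliftW : lift W ∘ₗ comul (R := k) = (counit (R := k)).smulRight m :=
    hC.lift_comp_comul_eq_counit_smulRight fun j x hx => by simp [hW j ⟨x, hx⟩]
  rw [← hαW, Cm.α_comp, hliftW, Cm.counit_id]

end RContramod

noncomputable section Statement13
open TensorProduct LinearMap

universe w
variable {k C : Type w} [Field k] [AddCommGroup C] [Module k C] [Coalgebra k C]

theorem stmt13_general {ι : Type w} [DecidableEq ι] (Ci : ι → Submodule k C)
    (hinternal : DirectSum.IsInternal Ci)
    (hsubcoalg : ∀ i, ∀ x ∈ Ci i, Coalgebra.comul (R := k) (A := C) x ∈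
      LinearMap.range (TensorProduct.map (Ci i).subtype (Ci i).subtype))
    (εi : ι → (C →ₗ[k] k))
    (hεi_on : ∀ i, ∀ x ∈ Ci i, εi i x = Coalgebra.counit (R := k) (A := C) x)
    (hεi_off : ∀ i j, i ≠ j → ∀ x ∈ Ci j, εi i x = 0)
    {M : Type w} [AddCommGroup M] [Module k M] (Cm : RContramod k C M) :
    (∀ (i : ι) (m : M), Cm.α ((εi i).smulRight (Cm.α ((εi i).smulRight m)))
        = Cm.α ((εi i).smulRight m)) ∧
    (∀ (i j : ι), i ≠ j → ∀ m : M,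
        Cm.α ((εi i).smulRight (Cm.α ((εi j).smulRight m))) = 0) ∧
    Function.Bijective (fun (m : M) (i : ι) =>
      (⟨Cm.α ((εi i).smulRight m), Set.mem_range_self m⟩ :
        Set.range (fun m : M => Cm.α ((εi i).smulRight m)))) := by
  have hC : IsSubcoalgebraDecomposition Ci εi :=
    ⟨hinternal.submodule_iSup_eq_top, hsubcoalg, hεi_on, hεi_off⟩
  refine ⟨Cm.α_smulRight_α_smulRight_self hC,
    fun i j hij => Cm.α_smulRight_α_smulRight_of_ne hC hij, ?_⟩
  choose G hG using fun v : ι → M =>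
    hinternal.exists_linearMap_restrict_eq fun j => ((εi j) ∘ₗ (Ci j).subtype).smulRight (v j)
  refine Function.bijective_iff_has_inverse.mpr
    ⟨fun v => Cm.α (G fun j => v j), fun m => Cm.α_eq_of_forall_mem_eq_smul hC hinternal
      fun j x hx => hG _ j ⟨x, hx⟩, fun v => funext fun i => Subtype.ext ?_⟩
  obtain ⟨w, hw⟩ := (v i).2
  calc Cm.α ((εi i).smulRight (Cm.α (G fun j => v j)))
      = Cm.α ((εi i).smulRight (v i : M)) :=
        Cm.α_smulRight_α hC i fun y hy => by simp [hG _ i ⟨y, hy⟩, hεi_on i y hy]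
    _ = v i := by rw [← hw, Cm.α_smulRight_α_smulRight_self hC]

/-- if `C = ⊕ᵢ Cᵢ` is a direct sum of finite-dimensional subcoalgebras with
counits `εᵢ`, then for a right `C`-contramodule `(M, α)`, setting `αᵢ(m) = α(εᵢ(−)m)` and
`Mᵢ = αᵢ(M)`, one has `αᵢ ∘ αⱼ = δᵢⱼ αᵢ` and `m ↦ (αᵢ(m))ᵢ` is a bijection
`M ≅ ∏ᵢ Mᵢ`. -/
theorem stmt13 {ι : Type w} [DecidableEq ι] (Ci : ι → Submodule k C)
    (hinternal : DirectSum.IsInternal Ci)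
    (hfd : ∀ i, FiniteDimensional k ↥(Ci i))
    (hsubcoalg : ∀ i, ∀ x ∈ Ci i, Coalgebra.comul (R := k) (A := C) x ∈
      LinearMap.range (TensorProduct.map (Ci i).subtype (Ci i).subtype))
    (εi : ι → (C →ₗ[k] k))
    (hεi_on : ∀ i, ∀ x ∈ Ci i, εi i x = Coalgebra.counit (R := k) (A := C) x)
    (hεi_off : ∀ i j, i ≠ j → ∀ x ∈ Ci j, εi i x = 0)
    {M : Type w} [AddCommGroup M] [Module k M] (Cm : RContramod k C M) :
    (∀ (i : ι) (m : M), Cm.α ((εi i).smulRight (Cm.α ((εi i).smulRight m)))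
        = Cm.α ((εi i).smulRight m)) ∧
    (∀ (i j : ι), i ≠ j → ∀ m : M,
        Cm.α ((εi i).smulRight (Cm.α ((εi j).smulRight m))) = 0) ∧
    Function.Bijective (fun (m : M) (i : ι) =>
      (⟨Cm.α ((εi i).smulRight m), Set.mem_range_self m⟩ :
        Set.range (fun m : M => Cm.α ((εi i).smulRight m)))) :=
  stmt13_general Ci hinternal hsubcoalg εi hεi_on hεi_off Cm

end Statement13
end

section
/- Let G be a group with group Hopf algebra kG (Δ(g) = g⊗g, ε(g) = 1). A right kG-contramodule (M, α) is equivalent to the data of a family of subspaces (M_g)_{g∈G} with M ≅ ∏_{g∈G} M_g via m ↦ (α(δ_g(−)m))_g, where δ_g(x) = 1 if x = g and 0 for other group elements; i.e., the category of kG-contramodules is equivalent to the category of G-graded vector spaces of product type ∏_g M_g. -/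
open TensorProduct LinearMap

noncomputable section Statement15
open TensorProduct LinearMap

universe w
variable (k : Type w) (G : Type w) [Field k] [Group G]

/-- The comultiplication of the group coalgebra `kG`: `Δ(g) = g ⊗ g`. -/
def comulG : (G →₀ k) →ₗ[k] (G →₀ k) ⊗[k] (G →₀ k) :=
  Finsupp.lsum k fun g => LinearMap.toSpanSingleton k _
    (Finsupp.single g (1 : k) ⊗ₜ[k] Finsupp.single g (1 : k))

/-- The counit of the group coalgebra `kG`: `ε(g) = 1`. -/
def counitG : (G →₀ k) →ₗ[k] k :=
  Finsupp.lsum k fun _ => LinearMap.id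

variable {k G}

/-- A right `kG`-contramodule structure on `M`. -/
structure KGContramod (M : Type w) [AddCommGroup M] [Module k M] where
  α : ((G →₀ k) →ₗ[k] M) →ₗ[k] M
  contraassoc : ∀ f : (G →₀ k) ⊗[k] (G →₀ k) →ₗ[k] M,
      α (α ∘ₗ (TensorProduct.curry f)) = α (f ∘ₗ comulG k G)
  counit_id : ∀ m : M, α ((counitG k G).smulRight m) = m

end Statement15

/-! Evaluated on the basis of `kG`, contra-associativity says `α(g ↦ α(F_g)) = α(g ↦ F_g(g))`.
Write `π_g m = α(δ_g(−) m)`. Taking `F_g = δ_g(−) m` and using the counit axiom gives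
`m = α(g ↦ π_g m)`, so `m` is determined by its components. Taking `F_g = δ_h(g) F` gives
`π_h (α F) = π_h (F h)`; hence each `π_h` is idempotent, and a family `(x_g)` with `x_g ∈ im π_g`
is the family of components of `α(g ↦ x_g)`. -/

universe w

namespace KGContramod

variable {k G M : Type w} [Field k] [AddCommGroup M] [Module k M]
  (Cm : KGContramod (k := k) (G := G) M)

lemma α_linearCombination_α (F : G → (G →₀ k) →ₗ[k] M) :
    Cm.α (Finsupp.linearCombination k (fun g => Cm.α (F g))) =
      Cm.α (Finsupp.linearCombination k (fun g => F g (Finsupp.single g 1))) := by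
  have h := Cm.contraassoc (TensorProduct.lift (Finsupp.linearCombination k F))
  have hcurry : TensorProduct.curry (TensorProduct.lift (Finsupp.linearCombination k F)) =
      Finsupp.linearCombination k F := by
    ext; simp [TensorProduct.curry_apply]
  have hdiag : TensorProduct.lift (Finsupp.linearCombination k F) ∘ₗ comulG k G =
      Finsupp.linearCombination k (fun g => F g (Finsupp.single g 1)) := by
    ext; simp [comulG]
  rwa [hcurry, ← Finsupp.linearCombination_linear_comp, hdiag] at h

lemma lapply_smulRight_eq_linearCombination [DecidableEq G] (g : G) (m : M) :
    (Finsupp.lapply g).smulRight m = Finsupp.linearCombination k (Pi.single g m) := by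
  ext a
  by_cases h : a = g
  · subst h; simp
  · simp [Ne.symm h, h]

lemma counitG_smulRight_eq_linearCombination (m : M) :
    (counitG k G).smulRight m = Finsupp.linearCombination k (fun _ => m) := by
  ext; simp [counitG]

noncomputable def proj (g : G) (m : M) : M := Cm.α ((Finsupp.lapply g).smulRight m)

lemma proj_α [DecidableEq G] (g : G) (F : (G →₀ k) →ₗ[k] M) :
    Cm.proj g (Cm.α F) = Cm.proj g (F (Finsupp.single g 1)) := by
  have h := Cm.α_linearCombination_α (Pi.single g F)
  have hdiag : (fun a => Pi.single (M := fun _ => (G →₀ k) →ₗ[k] M) g F a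
      (Finsupp.single a 1)) = Pi.single g (F (Finsupp.single g 1)) := by
    ext a
    by_cases h : a = g
    · subst h; simp
    · simp [h]
  have hα : (fun a => Cm.α (Pi.single (M := fun _ => (G →₀ k) →ₗ[k] M) g F a)) =
      Pi.single g (Cm.α F) :=
    funext (Pi.apply_single (fun _ => Cm.α) (fun _ => map_zero _) g F)
  rwa [hdiag, hα, ← lapply_smulRight_eq_linearCombination,
    ← lapply_smulRight_eq_linearCombination] at h

lemma proj_proj [DecidableEq G] (g : G) (m : M) : Cm.proj g (Cm.proj g m) = Cm.proj g m := by
  have h := Cm.proj_α g ((Finsupp.lapply g).smulRight m)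
  rwa [LinearMap.smulRight_apply, Finsupp.lapply_apply, Finsupp.single_eq_same, one_smul] at h

lemma α_linearCombination_proj (m : M) :
    Cm.α (Finsupp.linearCombination k (fun g => Cm.proj g m)) = m := by
  have h := Cm.α_linearCombination_α (fun g => (Finsupp.lapply g).smulRight m)
  simp only [LinearMap.smulRight_apply, Finsupp.lapply_apply, Finsupp.single_eq_same,
    one_smul] at h
  rwa [← counitG_smulRight_eq_linearCombination, Cm.counit_id] at h

lemma ext_proj {m₁ m₂ : M} (h : ∀ g, Cm.proj g m₁ = Cm.proj g m₂) : m₁ = m₂ := by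
  rw [← Cm.α_linearCombination_proj m₁, ← Cm.α_linearCombination_proj m₂, funext h]

end KGContramod

section Statement15

variable (k : Type w) (G : Type w) [Field k] [Group G]
variable {k G}

/-- a right `kG`-contramodule `(M, α)` is determined by the family of
subspaces `M_g = α(δ_g(−)·M)`: the map `m ↦ (α(δ_g(−)m))_g` is a bijection
`M ≅ ∏_g M_g`.  (Here `δ_g` is the coefficient-at-`g` functional on `kG`.) -/
theorem stmt15 {M : Type w} [AddCommGroup M] [Module k M] (Cm : KGContramod (k := k) (G := G) M) :
    Function.Bijective (fun (m : M) (g : G) =>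
      (⟨Cm.α ((Finsupp.lapply g).smulRight m), Set.mem_range_self m⟩ :
        Set.range (fun m : M => Cm.α ((Finsupp.lapply g).smulRight m)))) := by
  classical
  refine ⟨fun m₁ m₂ h => Cm.ext_proj fun g => congrArg Subtype.val (congrFun h g), fun v => ?_⟩
  refine ⟨Cm.α (Finsupp.linearCombination k fun g => (v g : M)), funext fun g => Subtype.ext ?_⟩
  obtain ⟨m, hm⟩ := (v g).2
  change Cm.proj g _ = _
  rw [Cm.proj_α, Finsupp.linearCombination_single, one_smul, ← hm]
  exact Cm.proj_proj g m

end Statement15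
end
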